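/- Let f be a real-valued closed convex function with compact convex effective domain D ⊆ ℝ^n. Then the perspective function F(x,t) (defined as t·f(x/t) for t > 0 with x/t ∈ D, as 0 for t = 0 and x = 0, and +∞ otherwise) is itself a closed (lower semicontinuous) convex function on ℝ^n × ℝ. -/

import Mathlib

/-!
For nonempty `D`, the epigraph of the perspective is the set of `(t • z, t, r)` with `z ∈ D`,
`0 ≤ t` and `t * f z ≤ r`: at `t = 0` these are exactly the points `(0, 0, r)` with `0 ≤ r`.
This cone is convex: a combination of `(t₁ • z₁, t₁, r₁)` and `(t₂ • z₂, t₂, r₂)` with weights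
`a, b` and `t = a t₁ + b t₂ > 0` is of the same form, with `z` the convex combination of `z₁, z₂`
with weights `a t₁ / t, b t₂ / t`. It is closed, being the projection along the compact factor
`D` of a closed subset of `((ℝⁿ × ℝ) × ℝ) × D`; the sublevel sets of the perspective are its
slices, hence closed.
-/

open scoped Classical

/-- The perspective function of a closed convex function `f` with effective
domain `D`: `F(x,t) = t·f(x/t)` if `t > 0` and `x/t ∈ D`; `F(x,t) = 0` if
`t = 0` and `x = 0`; and `F(x,t) = +∞` otherwise. -/
noncomputable def persp {n : ℕ} (D : Set (Fin n → ℝ)) (f : (Fin n → ℝ) → ℝ)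
    (x : Fin n → ℝ) (t : ℝ) : EReal :=
  if 0 < t ∧ t⁻¹ • x ∈ D then ((t * f (t⁻¹ • x) : ℝ) : EReal)
  else if t = 0 ∧ x = 0 then (0 : EReal) else ⊤

theorem EReal.lowerSemicontinuous_of_isClosed_preimage_Iic_coe {α : Type*} [TopologicalSpace α]
    {F : α → EReal} (hF : ∀ r : ℝ, IsClosed (F ⁻¹' Set.Iic (r : EReal))) :
    LowerSemicontinuous F := by
  refine lowerSemicontinuous_iff_isClosed_preimage.2 fun y => ?_
  induction y using EReal.rec with
  | bot =>
    have hIic : Set.Iic (⊥ : EReal) = ⋂ r : ℝ, Set.Iic (r : EReal) := by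
      ext y
      simp only [Set.mem_Iic, le_bot_iff, Set.mem_iInter, EReal.eq_bot_iff_forall_lt]
      exact ⟨fun h r => (h (r - 1)).le.trans (by exact_mod_cast (sub_one_lt r).le),
        fun h r => (h (r - 1)).trans_lt (by exact_mod_cast sub_one_lt r)⟩
    rw [hIic, Set.preimage_iInter]
    exact isClosed_iInter hF
  | coe r => exact hF r
  | top => simp

section PerspectiveEpigraph

variable {E : Type*} [AddCommGroup E] [Module ℝ E]

def perspEpigraph (D : Set E) (f : E → ℝ) : Set ((E × ℝ) × ℝ) :=
  {q | ∃ z ∈ D, 0 ≤ q.1.2 ∧ q.1.1 = q.1.2 • z ∧ q.1.2 * f z ≤ q.2}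

theorem convex_perspEpigraph {D : Set E} {f : E → ℝ} (hf : ConvexOn ℝ D f) :
    Convex ℝ (perspEpigraph D f) := by
  rintro ⟨⟨x₁, t₁⟩, r₁⟩ ⟨z₁, hz₁, ht₁, hx₁, hr₁⟩ ⟨⟨x₂, t₂⟩, r₂⟩ ⟨z₂, hz₂, ht₂, hx₂, hr₂⟩ a b ha hb hab
  dsimp only at ht₁ hx₁ hr₁ ht₂ hx₂ hr₂
  subst hx₁ hx₂
  simp only [Prod.smul_mk, Prod.mk_add_mk, smul_eq_mul, smul_smul]
  have hr : a * t₁ * f z₁ + b * t₂ * f z₂ ≤ a * r₁ + b * r₂ := by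
    have := mul_le_mul_of_nonneg_left hr₁ ha
    have := mul_le_mul_of_nonneg_left hr₂ hb
    linarith
  obtain ht | ht := (add_nonneg (mul_nonneg ha ht₁) (mul_nonneg hb ht₂)).eq_or_lt
  · obtain ⟨h₁, h₂⟩ :=
      (add_eq_zero_iff_of_nonneg (mul_nonneg ha ht₁) (mul_nonneg hb ht₂)).1 ht.symm
    refine ⟨z₁, hz₁, ht.le, ?_, ?_⟩
    · simp [h₁, h₂]
    · simpa [h₁, h₂] using hr
  · set t := a * t₁ + b * t₂
    have hw : a * t₁ / t + b * t₂ / t = 1 := by rw [← add_div, div_self ht.ne']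
    refine ⟨(a * t₁ / t) • z₁ + (b * t₂ / t) • z₂,
      hf.1 hz₁ hz₂ (by positivity) (by positivity) hw, ht.le, ?_, ?_⟩
    · simp only [smul_add, smul_smul, mul_div_cancel₀ _ ht.ne']
    · calc t * f ((a * t₁ / t) • z₁ + (b * t₂ / t) • z₂)
          ≤ t * ((a * t₁ / t) * f z₁ + (b * t₂ / t) * f z₂) :=
            mul_le_mul_of_nonneg_left (hf.2 hz₁ hz₂ (by positivity) (by positivity) hw) ht.le
        _ = a * t₁ * f z₁ + b * t₂ * f z₂ := by
            rw [mul_add, ← mul_assoc, ← mul_assoc, mul_div_cancel₀ _ ht.ne',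
              mul_div_cancel₀ _ ht.ne']
        _ ≤ a * r₁ + b * r₂ := hr

variable [TopologicalSpace E] [T2Space E] [ContinuousSMul ℝ E]

theorem isClosed_perspEpigraph {D : Set E} {f : E → ℝ} (hD : IsCompact D)
    (hf : ContinuousOn f D) : IsClosed (perspEpigraph D f) := by
  have : CompactSpace D := isCompact_iff_compactSpace.1 hD
  have hf' : Continuous (D.domRestrict f) := hf.domRestrict
  have hclosed : IsClosed {p : ((E × ℝ) × ℝ) × D |
      0 ≤ p.1.1.2 ∧ p.1.1.1 = p.1.1.2 • (p.2 : E) ∧ p.1.1.2 * D.domRestrict f p.2 ≤ p.1.2} := by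
    simp only [Set.ofPred_and]
    exact (isClosed_le continuous_const (by fun_prop)).inter
      ((isClosed_eq (by fun_prop) (by fun_prop)).inter (isClosed_le (by fun_prop) (by fun_prop)))
  convert isClosedMap_fst_of_compactSpace (X := (E × ℝ) × ℝ) _ hclosed using 1
  ext q
  constructor
  · rintro ⟨z, hz, h⟩
    exact ⟨(q, ⟨z, hz⟩), h, rfl⟩
  · rintro ⟨⟨q, z, hz⟩, h, rfl⟩
    exact ⟨z, hz, h⟩

end PerspectiveEpigraph

theorem persp_le_coe_iff_mem_perspEpigraph {n : ℕ} {D : Set (Fin n → ℝ)} (hD : D.Nonempty)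
    (f : (Fin n → ℝ) → ℝ) (x : Fin n → ℝ) (t r : ℝ) :
    persp D f x t ≤ (r : EReal) ↔ ((x, t), r) ∈ perspEpigraph D f := by
  simp only [perspEpigraph, Set.mem_ofPred_eq]
  unfold persp
  split_ifs with hpos hzero
  · rw [EReal.coe_le_coe_iff]
    refine ⟨fun h => ⟨_, hpos.2, hpos.1.le, (smul_inv_smul₀ hpos.1.ne' x).symm, h⟩, ?_⟩
    rintro ⟨z, -, -, rfl, h⟩
    rwa [inv_smul_smul₀ hpos.1.ne']
  · obtain ⟨rfl, rfl⟩ := hzero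
    obtain ⟨z, hz⟩ := hD
    simp only [EReal.coe_nonneg, zero_smul, zero_mul, le_refl, true_and]
    exact ⟨fun h => ⟨z, hz, h⟩, fun ⟨_, _, h⟩ => h⟩
  · simp only [top_le_iff, EReal.coe_ne_top, false_iff, not_exists, not_and]
    rintro z hz ht rfl -
    rcases ht.eq_or_lt with rfl | ht
    · exact hzero ⟨rfl, zero_smul ℝ z⟩
    · exact hpos ⟨ht, by rwa [inv_smul_smul₀ ht.ne']⟩

theorem stmt_4_general {n : ℕ} (D : Set (Fin n → ℝ)) (f : (Fin n → ℝ) → ℝ)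
    (hDne : D.Nonempty) (hDc : IsCompact D)
    (hf : ConvexOn ℝ D f) (hfc : ContinuousOn f D) :
    LowerSemicontinuous (fun p : (Fin n → ℝ) × ℝ => persp D f p.1 p.2) ∧
      Convex ℝ {q : ((Fin n → ℝ) × ℝ) × ℝ | persp D f q.1.1 q.1.2 ≤ (q.2 : EReal)} := by
  constructor
  · refine EReal.lowerSemicontinuous_of_isClosed_preimage_Iic_coe fun r => ?_
    convert (isClosed_perspEpigraph hDc hfc).preimage (Continuous.prodMk_left r) using 1
    ext p
    exact persp_le_coe_iff_mem_perspEpigraph hDne f p.1 p.2 r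
  · convert convex_perspEpigraph hf using 1
    ext q
    exact persp_le_coe_iff_mem_perspEpigraph hDne f q.1.1 q.1.2 q.2

/-- The perspective of a closed convex function with compact convex effective
domain is itself closed (lower semicontinuous) and convex, the latter expressed
via convexity of its epigraph. -/
theorem stmt_4 {n : ℕ} (D : Set (Fin n → ℝ)) (f : (Fin n → ℝ) → ℝ)
    (hDne : D.Nonempty) (hDc : IsCompact D) (hDconv : Convex ℝ D)
    (hf : ConvexOn ℝ D f) (hfc : ContinuousOn f D) :
    LowerSemicontinuous (fun p : (Fin n → ℝ) × ℝ => persp D f p.1 p.2) ∧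
      Convex ℝ {q : ((Fin n → ℝ) × ℝ) × ℝ | persp D f q.1.1 q.1.2 ≤ (q.2 : EReal)} :=
  stmt_4_general D f hDne hDc hf hfc
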